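/- arXiv:1201.5921 — 2 statements merged into one kernel-verified Lean document; each statement's English description precedes it below -/
import Mathlib

section
/- If (v_1, ..., v_N) is a p-generator sequence of vectors in Z_{p^r}[x]^q, then the set of p-linear combinations of v_1, ..., v_N equals the Z_{p^r}[x]-submodule spanned by v_1, ..., v_N; in particular the p-span is a submodule of Z_{p^r}[x]^q. -/
open Polynomial

open scoped Classical

/-- Support of a polynomial vector: monomials `(degree, position)` ordered lexicographically,
which is the term-over-position (top) ordering. -/
noncomputable def vsupp {R : Type*} [CommRing R] {q : ℕ} (f : Fin q → R[X]) :
    Finset (Lex (ℕ × Fin q)) :=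
  Finset.univ.biUnion fun i => (f i).support.image fun α => toLex (α, i)

/-- Leading monomial w.r.t. the top ordering (`⊥` for the zero vector). -/
noncomputable def vlm {R : Type*} [CommRing R] {q : ℕ} (f : Fin q → R[X]) :
    WithBot (Lex (ℕ × Fin q)) := (vsupp f).max

/-- Degree of the leading monomial (junk value `0` for the zero vector). -/
noncomputable def vdeg {R : Type*} [CommRing R] {q : ℕ} (f : Fin q → R[X]) : ℕ :=
  WithBot.unbotD 0 ((vlm f).map fun m => (ofLex m).1)

/-- Leading position. -/
noncomputable def vlpos {R : Type*} [CommRing R] {q : ℕ} (f : Fin q → R[X]) : WithBot (Fin q) :=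
  (vlm f).map fun m => (ofLex m).2

/-- Leading coefficient. -/
noncomputable def vlc {R : Type*} [CommRing R] {q : ℕ} (f : Fin q → R[X]) : R :=
  WithBot.unbotD 0 ((vlm f).map fun m => (f (ofLex m).2).coeff (ofLex m).1)

/-- `c` is a digit: one of `0,1,…,p-1` (as a ring element). -/
def IsDigit {R : Type*} [CommRing R] (p : ℕ) (c : R) : Prop := ∃ t : ℕ, t < p ∧ c = (t : R)

/-- All coefficients of `a` are digits, i.e. `a ∈ A_p[x]`. -/
def IsDigitPoly {R : Type*} [CommRing R] (p : ℕ) (a : R[X]) : Prop := ∀ n, IsDigit p (a.coeff n)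

/-- The p-span: the set of all p-linear combinations of the `v i`. -/
def pSpan {R : Type*} [CommRing R] {q : ℕ} (p : ℕ) {ι : Type*} [Fintype ι]
    (v : ι → Fin q → R[X]) : Set (Fin q → R[X]) :=
  {f | ∃ a : ι → R[X], (∀ i, IsDigitPoly p (a i)) ∧ f = ∑ i, a i • v i}

/-- p-generator sequence: `p • v i` is a p-linear combination of the later elements
(for the last element, `p • v i = 0`). -/
def IsPGenSeq {R : Type*} [CommRing R] {q : ℕ} (p : ℕ) {ι : Type*} [Fintype ι] [LinearOrder ι]
    (v : ι → Fin q → R[X]) : Prop :=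
  ∀ i : ι, ∃ a : ι → R[X], (∀ j, IsDigitPoly p (a j)) ∧ (∀ j, j ≤ i → a j = 0) ∧
    (p : R) • v i = ∑ j, a j • v j

/-- p-linear independence: only the trivial p-linear combination vanishes. -/
def PLinIndep {R : Type*} [CommRing R] {q : ℕ} (p : ℕ) {ι : Type*} [Fintype ι]
    (v : ι → Fin q → R[X]) : Prop :=
  ∀ a : ι → R[X], (∀ i, IsDigitPoly p (a i)) → ∑ i, a i • v i = 0 → ∀ i, a i = 0

/-- The p-Predictable Leading Monomial (p-PLM) property. -/
def HasPPLM {R : Type*} [CommRing R] {q : ℕ} (p : ℕ) {ι : Type*} [Fintype ι]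
    (v : ι → Fin q → R[X]) : Prop :=
  ∀ a : ι → R[X], (∀ i, IsDigitPoly p (a i)) → ∑ i, a i • v i ≠ 0 →
    vlm (∑ i, a i • v i) = (Finset.univ.filter fun i => a i ≠ 0).sup fun i => vlm (a i • v i)

/-!
Write the coefficient of `v i` in an `R[X]`-combination as `d + p * c` with `d` a digit
polynomial. The carry `c * (p • v i)` is, by the generator property, a combination of the later
`v j` only, so it can be absorbed into their coefficients; digitizing the coefficients from the
first index to the last therefore turns any combination into a p-linear one.
-/

theorem pSpan_subset_span {R : Type*} [CommRing R] {q : ℕ} (p : ℕ) {ι : Type*} [Fintype ι]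
    (v : ι → Fin q → R[X]) :
    pSpan p v ⊆ (Submodule.span R[X] (Set.range v) : Set (Fin q → R[X])) := by
  rintro _ ⟨a, -, rfl⟩
  exact Submodule.sum_mem _ fun i _ => Submodule.smul_mem _ _ (Submodule.subset_span ⟨i, rfl⟩)

theorem ZMod.natCast_mod_add_mul_div {n : ℕ} [NeZero n] (p : ℕ) (x : ZMod n) :
    ((x.val % p : ℕ) : ZMod n) + p * ((x.val / p : ℕ) : ZMod n) = x := by
  rw [← Nat.cast_mul, ← Nat.cast_add, Nat.mod_add_div, ZMod.natCast_zmod_val]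

def HasDigitSplitting (p : ℕ) (R : Type*) [CommRing R] : Prop :=
  ∀ a : R[X], ∃ d c : R[X], IsDigitPoly p d ∧ a = d + (p : R[X]) * c

theorem ZMod.hasDigitSplitting {n p : ℕ} [NeZero n] (hp : 0 < p) :
    HasDigitSplitting p (ZMod n) := by
  intro a
  let d : (ZMod n)[X] :=
    ⟨.ofCoeff (a.toFinsupp.coeff.mapRange (fun x => ((x.val % p : ℕ) : ZMod n)) (by simp))⟩
  let c : (ZMod n)[X] :=
    ⟨.ofCoeff (a.toFinsupp.coeff.mapRange (fun x => ((x.val / p : ℕ) : ZMod n)) (by simp))⟩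
  refine ⟨d, c, fun k => ⟨(a.coeff k).val % p, Nat.mod_lt _ hp, rfl⟩, ?_⟩
  ext k
  rw [coeff_add, coeff_natCast_mul]
  exact (ZMod.natCast_mod_add_mul_div p (a.coeff k)).symm

section PGenSeq

variable {R : Type*} [CommRing R] {q p : ℕ} {ι : Type*} [Fintype ι] [LinearOrder ι]
  {v : ι → Fin q → R[X]}

theorem exists_isDigitPoly_sum_eq_of_isPGenSeq (hv : IsPGenSeq p v)
    (hR : HasDigitSplitting p R)
    (s : Finset ι) (hs : IsUpperSet (s : Set ι)) (a : ι → R[X]) :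
    ∃ b : ι → R[X], (∀ i ∈ s, IsDigitPoly p (b i)) ∧
      ∑ i ∈ s, a i • v i = ∑ i ∈ s, b i • v i := by
  induction s using Finset.induction_on_min generalizing a with
  | empty => exact ⟨0, by simp, by simp⟩
  | insert i s hi_lt ih =>
    have hi : i ∉ s := fun h => lt_irrefl i (hi_lt i h)
    have hs_gt : ∀ j, i < j → j ∈ s := fun j hij =>
      (Finset.mem_insert.mp (hs (le_of_lt hij) (Finset.mem_insert_self i s))).resolve_left hij.ne'
    have hs' : IsUpperSet (s : Set ι) := fun x y hxy hx =>
      hs_gt y ((hi_lt x hx).trans_le hxy)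
    obtain ⟨e, -, he_zero, he⟩ := hv i
    have hpv : (p : R) • v i = ∑ j ∈ s, e j • v j := by
      refine he.trans (Finset.sum_subset (Finset.subset_univ s) fun j _ hj => ?_).symm
      rw [he_zero j (not_lt.mp fun hij => hj (hs_gt j hij)), zero_smul]
    obtain ⟨d, c, hd, hac⟩ := hR (a i)
    obtain ⟨b, hb, hsum⟩ := ih hs' fun j => a j + c * e j
    refine ⟨Function.update b i d, ?_, ?_⟩
    · intro j hj
      rcases Finset.mem_insert.mp hj with rfl | hj
      · simpa using hd
      · simpa [ne_of_mem_of_not_mem hj hi] using hb j hj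
    · have hupd : ∑ j ∈ s, Function.update b i d j • v j = ∑ j ∈ s, b j • v j :=
        Finset.sum_congr rfl fun j hj => by rw [Function.update_of_ne (ne_of_mem_of_not_mem hj hi)]
      rw [Finset.sum_insert hi, Finset.sum_insert hi, Function.update_self, hupd, ← hsum, hac]
      simp only [add_smul, mul_smul, Finset.sum_add_distrib, ← Finset.smul_sum, ← hpv]
      rw [Nat.cast_smul_eq_nsmul, Nat.cast_smul_eq_nsmul, smul_comm]
      abel

theorem span_subset_pSpan_of_isPGenSeq (hv : IsPGenSeq p v)
    (hR : HasDigitSplitting p R) :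
    (Submodule.span R[X] (Set.range v) : Set (Fin q → R[X])) ⊆ pSpan p v := by
  intro f hf
  obtain ⟨a, rfl⟩ := (Submodule.mem_span_range_iff_exists_fun R[X]).mp hf
  obtain ⟨b, hb, hab⟩ := exists_isDigitPoly_sum_eq_of_isPGenSeq hv hR Finset.univ
    (by simpa using isUpperSet_univ) a
  exact ⟨b, fun i => hb i (Finset.mem_univ i), hab⟩

end PGenSeq

theorem pSpan_eq_span_of_isPGenSeq_general (p r q N : ℕ) (hp : p.Prime)
    (v : Fin N → Fin q → Polynomial (ZMod (p ^ r))) (hv : IsPGenSeq p v) :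
    pSpan p v =
      (Submodule.span (Polynomial (ZMod (p ^ r))) (Set.range v) : Set (Fin q → Polynomial (ZMod (p ^ r)))) := by
  have : NeZero (p ^ r) := ⟨pow_ne_zero r hp.ne_zero⟩
  exact (pSpan_subset_span p v).antisymm
    (span_subset_pSpan_of_isPGenSeq hv (ZMod.hasDigitSplitting hp.pos))

/-- If `(v_1, …, v_N)` is a p-generator sequence in `Z_{p^r}[x]^q`, then its p-span equals the
`Z_{p^r}[x]`-submodule spanned by the `v_i`; in particular the p-span is a submodule. -/
theorem pSpan_eq_span_of_isPGenSeq (p r q N : ℕ) (hp : p.Prime) (hr : 0 < r)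
    (v : Fin N → Fin q → Polynomial (ZMod (p ^ r))) (hv : IsPGenSeq p v) :
    pSpan p v =
      (Submodule.span (Polynomial (ZMod (p ^ r))) (Set.range v) : Set (Fin q → Polynomial (ZMod (p ^ r)))) :=
  pSpan_eq_span_of_isPGenSeq_general p r q N hp v hv
end

section
/- Let M be a submodule of F[x]^q over a field F with a minimal Gröbner basis G = {g_1, ..., g_m} with respect to a fixed monomial ordering (top or pot). Then for any nonzero f ∈ M written as f = a_1 g_1 + ... + a_m g_m with a_i ∈ F[x], the leading monomial of f equals the maximum over all i with a_i ≠ 0 of the leading monomial of a_i g_i (the Predictable Leading Monomial property). -/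
open Polynomial

open scoped Classical

/-- Leading term of a polynomial vector, as a polynomial vector. -/
noncomputable def vlt {R : Type*} [CommRing R] {q : ℕ} (f : Fin q → R[X]) : Fin q → R[X] :=
  WithBot.unbotD 0 ((vlm f).map fun m => fun j : Fin q =>
    if j = (ofLex m).2 then C ((f (ofLex m).2).coeff (ofLex m).1) * X ^ (ofLex m).1 else 0)

/-- The leading term submodule `L(F)`. -/
noncomputable def ltSubmodule {R : Type*} [CommRing R] {q : ℕ} (S : Set (Fin q → R[X])) :
    Submodule R[X] (Fin q → R[X]) :=
  Submodule.span R[X] (vlt '' S)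

/-- `G` is a Gröbner basis of `M`: `G ⊆ M` and `L(G) = L(M)`. -/
def IsGroebner {R : Type*} [CommRing R] {q : ℕ} (M : Submodule R[X] (Fin q → R[X]))
    (G : Finset (Fin q → R[X])) : Prop :=
  (G : Set (Fin q → R[X])) ⊆ M ∧
    ltSubmodule (G : Set (Fin q → R[X])) = ltSubmodule (M : Set (Fin q → R[X]))

/-- One-step reduction of `f` to `h` modulo the finite set `Fs` (Adams–Loustaunau Def. 4.1.1). -/
def ReducesOneStep {R : Type*} [CommRing R] {q : ℕ} (Fs : Finset (Fin q → R[X]))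
    (f h : Fin q → R[X]) : Prop :=
  f ≠ 0 ∧ ∃ (m : ℕ) (jv : Fin m → Fin q → R[X]) (α : Fin m → ℕ) (β : Fin m → R),
    0 < m ∧ (∀ i, jv i ∈ Fs) ∧ (∀ i, jv i ≠ 0) ∧ Function.Injective jv ∧ (∀ i, β i ≠ 0) ∧
    (∀ i, vlm f = (vlm (jv i)).map fun mm => toLex (α i + (ofLex mm).1, (ofLex mm).2)) ∧
    vlt f = ∑ i, (C (β i) * X ^ α i) • vlt (jv i) ∧
    h = f - ∑ i, (C (β i) * X ^ α i) • jv i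

/-- Minimal Gröbner basis: a Gröbner basis each of whose elements is irreducible
modulo the others. -/
def IsMinimalGroebner {R : Type*} [CommRing R] {q : ℕ} (M : Submodule R[X] (Fin q → R[X]))
    (G : Finset (Fin q → R[X])) : Prop :=
  IsGroebner M G ∧ ∀ g ∈ G, ∀ h, ¬ ReducesOneStep (G.erase g) g h
/-!
In a minimal Gröbner basis no leading monomial divides another, and in `F[x]^q` monomials in
the same position are totally ordered by divisibility; hence the elements of the basis have
pairwise distinct leading positions. Multiplying by a nonzero polynomial keeps the leading
position, so the nonzero summands `aᵢ gᵢ` have pairwise distinct leading monomials, and the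
largest of them cannot cancel in the sum.
-/

section LeadingMonomial

variable {R : Type*} [CommRing R] {q : ℕ}

noncomputable def vcoeff (f : Fin q → R[X]) (x : Lex (ℕ × Fin q)) : R :=
  (f (ofLex x).2).coeff (ofLex x).1

lemma mem_vsupp_iff {f : Fin q → R[X]} {x : Lex (ℕ × Fin q)} :
    x ∈ vsupp f ↔ vcoeff f x ≠ 0 := by
  simp only [vsupp, vcoeff, Finset.mem_biUnion, Finset.mem_univ, true_and, Finset.mem_image,
    mem_support_iff]
  constructor
  · rintro ⟨i, n, hn, rfl⟩
    exact hn
  · intro hx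
    exact ⟨(ofLex x).2, (ofLex x).1, hx, rfl⟩

lemma vcoeff_add (f g : Fin q → R[X]) (x : Lex (ℕ × Fin q)) :
    vcoeff (f + g) x = vcoeff f x + vcoeff g x :=
  coeff_add _ _ _

lemma le_vlm {f : Fin q → R[X]} {x : Lex (ℕ × Fin q)} (hx : vcoeff f x ≠ 0) :
    (x : WithBot (Lex (ℕ × Fin q))) ≤ vlm f :=
  Finset.le_max (mem_vsupp_iff.2 hx)

lemma vcoeff_eq_zero_of_vlm_lt {f : Fin q → R[X]} {x : Lex (ℕ × Fin q)}
    (hx : vlm f < (x : WithBot (Lex (ℕ × Fin q)))) : vcoeff f x = 0 :=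
  not_not.1 fun h => (le_vlm h).not_gt hx

lemma vcoeff_ne_zero_of_vlm_eq {f : Fin q → R[X]} {x : Lex (ℕ × Fin q)}
    (hx : vlm f = (x : WithBot (Lex (ℕ × Fin q)))) : vcoeff f x ≠ 0 :=
  mem_vsupp_iff.1 (Finset.mem_of_max hx)

lemma vlm_eq_of_vcoeff {f : Fin q → R[X]} {x : Lex (ℕ × Fin q)} (hx : vcoeff f x ≠ 0)
    (hgt : ∀ y, x < y → vcoeff f y = 0) : vlm f = (x : WithBot (Lex (ℕ × Fin q))) :=
  le_antisymm (Finset.max_le fun y hy => WithBot.coe_le_coe.2 <|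
    not_lt.1 fun hxy => mem_vsupp_iff.1 hy (hgt y hxy)) (le_vlm hx)

lemma vlm_eq_bot_iff {f : Fin q → R[X]} : vlm f = ⊥ ↔ f = 0 := by
  rw [vlm, Finset.max_eq_bot, Finset.eq_empty_iff_forall_notMem]
  constructor
  · intro h
    funext i
    ext n
    by_contra hn
    exact h (toLex (n, i)) (mem_vsupp_iff.2 hn)
  · rintro rfl x hx
    exact mem_vsupp_iff.1 hx rfl

@[simp]
lemma vlm_zero : vlm (0 : Fin q → R[X]) = ⊥ :=
  vlm_eq_bot_iff.2 rfl

lemma exists_vlm_eq {f : Fin q → R[X]} (hf : f ≠ 0) :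
    ∃ d p, vlm f = ((toLex (d, p) : Lex (ℕ × Fin q)) : WithBot (Lex (ℕ × Fin q))) := by
  obtain ⟨x, hx⟩ := WithBot.ne_bot_iff_exists.1 (mt vlm_eq_bot_iff.1 hf)
  exact ⟨(ofLex x).1, (ofLex x).2, hx.symm⟩

lemma vlm_add_of_lt {f g : Fin q → R[X]} (h : vlm g < vlm f) : vlm (f + g) = vlm f := by
  obtain ⟨x, hx⟩ := WithBot.ne_bot_iff_exists.1 h.ne_bot
  rw [← hx] at h ⊢
  refine vlm_eq_of_vcoeff ?_ fun y hy => ?_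
  · rw [vcoeff_add, vcoeff_eq_zero_of_vlm_lt h, add_zero]
    exact vcoeff_ne_zero_of_vlm_eq hx.symm
  · have hy' : (x : WithBot (Lex (ℕ × Fin q))) < y := WithBot.coe_lt_coe.2 hy
    rw [vcoeff_add, vcoeff_eq_zero_of_vlm_lt (hx ▸ hy'), vcoeff_eq_zero_of_vlm_lt (h.trans hy'),
      add_zero]

lemma vlm_add_of_ne {f g : Fin q → R[X]} (h : vlm f ≠ vlm g) :
    vlm (f + g) = vlm f ⊔ vlm g := by
  rcases h.lt_or_gt with h | h
  · rw [add_comm, vlm_add_of_lt h, sup_of_le_right h.le]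
  · rw [vlm_add_of_lt h, sup_of_le_left h.le]

theorem vlm_sum_of_ne {ι : Type*} [DecidableEq ι] (s : Finset ι) (F : ι → Fin q → R[X])
    (hF : ∀ i ∈ s, ∀ j ∈ s, i ≠ j → F i ≠ 0 → vlm (F i) ≠ vlm (F j)) :
    vlm (∑ i ∈ s, F i) = s.sup fun i => vlm (F i) := by
  induction s using Finset.induction_on with
  | empty => simp
  | insert i s hi ih =>
    have ih := ih fun j hj k hk => hF j (s.mem_insert_of_mem hj) k (s.mem_insert_of_mem hk)
    rw [Finset.sum_insert hi, Finset.sup_insert, ← ih]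
    by_cases hFi : F i = 0
    · simp [hFi]
    refine vlm_add_of_ne fun heq => ?_
    have hs : s.Nonempty := Finset.nonempty_iff_ne_empty.2 fun hs => by
      simp [hs, vlm_eq_bot_iff, hFi] at heq
    obtain ⟨j, hj, hsup⟩ := s.exists_mem_eq_sup hs fun i => vlm (F i)
    exact hF i (s.mem_insert_self i) j (s.mem_insert_of_mem hj) (ne_of_mem_of_not_mem hj hi).symm
      hFi (heq.trans (ih.trans hsup))

end LeadingMonomial

section Smul

variable {R : Type*} [CommRing R] {q : ℕ} {f : Fin q → R[X]} {d : ℕ} {p : Fin q}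

lemma natDegree_le_of_vlm_eq (hf : vlm f = ((toLex (d, p) : Lex (ℕ × Fin q)) : WithBot _))
    (j : Fin q) : (f j).natDegree ≤ d := by
  by_cases hj : f j = 0
  · simp [hj]
  have h := le_vlm (f := f) (x := toLex ((f j).natDegree, j)) (mt leadingCoeff_eq_zero.1 hj)
  rw [hf, WithBot.coe_le_coe, Prod.Lex.toLex_le_toLex] at h
  omega

lemma natDegree_lt_of_vlm_eq (hf : vlm f = ((toLex (d, p) : Lex (ℕ × Fin q)) : WithBot _))
    {j : Fin q} (hj : p < j) (hj0 : f j ≠ 0) : (f j).natDegree < d := by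
  have h := le_vlm (f := f) (x := toLex ((f j).natDegree, j)) (mt leadingCoeff_eq_zero.1 hj0)
  rw [hf, WithBot.coe_le_coe, Prod.Lex.toLex_le_toLex] at h
  exact h.resolve_right fun h' => h'.2.not_gt hj

lemma natDegree_eq_of_vlm_eq (hf : vlm f = ((toLex (d, p) : Lex (ℕ × Fin q)) : WithBot _)) :
    (f p).natDegree = d :=
  (natDegree_le_of_vlm_eq hf p).antisymm (le_natDegree_of_ne_zero (vcoeff_ne_zero_of_vlm_eq hf))

lemma vlm_smul [NoZeroDivisors R] {a : R[X]} (ha : a ≠ 0)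
    (hf : vlm f = ((toLex (d, p) : Lex (ℕ × Fin q)) : WithBot _)) :
    vlm (a • f) = ((toLex (a.natDegree + d, p) : Lex (ℕ × Fin q)) : WithBot _) := by
  have hfp : (f p).natDegree = d := natDegree_eq_of_vlm_eq hf
  have hfp0 : f p ≠ 0 := fun h => vcoeff_ne_zero_of_vlm_eq hf (by simp [vcoeff, h])
  refine vlm_eq_of_vcoeff ?_ fun ⟨β, j⟩ hy => ?_
  · change (a * f p).coeff (a.natDegree + d) ≠ 0
    rw [← hfp, coeff_mul_degree_add_degree]
    exact mul_ne_zero (mt leadingCoeff_eq_zero.1 ha) (mt leadingCoeff_eq_zero.1 hfp0)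
  change (a * f j).coeff β = 0
  by_cases hj0 : f j = 0
  · simp [hj0]
  refine coeff_eq_zero_of_natDegree_lt (natDegree_mul_le.trans_lt ?_)
  rcases Prod.Lex.toLex_lt_toLex.1 hy with hβ | ⟨rfl, hj⟩
  · linarith [natDegree_le_of_vlm_eq hf j]
  · linarith [natDegree_lt_of_vlm_eq hf hj hj0]

lemma vlpos_smul [NoZeroDivisors R] {a : R[X]} (ha : a ≠ 0) (f : Fin q → R[X]) :
    vlpos (a • f) = vlpos f := by
  by_cases hf : f = 0
  · rw [hf, smul_zero]
  obtain ⟨d, p, hd⟩ := exists_vlm_eq hf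
  simp [vlpos, hd, vlm_smul ha hd]

end Smul

section MinimalGroebner

variable {F : Type*} [Field F] {q : ℕ}

lemma vlt_eq_of_vlm_eq {g : Fin q → F[X]} {d : ℕ} {p : Fin q}
    (h : vlm g = ((toLex (d, p) : Lex (ℕ × Fin q)) : WithBot _)) :
    vlt g = fun j => if j = p then C ((g p).coeff d) * X ^ d else 0 := by
  rw [vlt, h]
  rfl

/-- If `lm g₁ = x^d₁ eₚ` divides `lm g₂ = x^d₂ eₚ`, then `g₂` reduces modulo any set containing
`g₁`, by subtracting `(lc g₂ / lc g₁) x^(d₂ - d₁) g₁`. -/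
lemma exists_reducesOneStep_of_vlm_eq {Fs : Finset (Fin q → F[X])} {g₁ g₂ : Fin q → F[X]}
    (hmem : g₁ ∈ Fs) {d₁ d₂ : ℕ} {p : Fin q}
    (h₁ : vlm g₁ = ((toLex (d₁, p) : Lex (ℕ × Fin q)) : WithBot _))
    (h₂ : vlm g₂ = ((toLex (d₂, p) : Lex (ℕ × Fin q)) : WithBot _)) (hd : d₁ ≤ d₂) :
    ∃ h, ReducesOneStep Fs g₂ h := by
  have hlc₁ : (g₁ p).coeff d₁ ≠ 0 := vcoeff_ne_zero_of_vlm_eq h₁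
  have hlc₂ : (g₂ p).coeff d₂ ≠ 0 := vcoeff_ne_zero_of_vlm_eq h₂
  refine ⟨_, fun h => by simp [h] at h₂, 1, fun _ => g₁, fun _ => d₂ - d₁,
    fun _ => (g₂ p).coeff d₂ / (g₁ p).coeff d₁, one_pos, fun _ => hmem,
    fun _ h => by simp [h] at h₁, Function.injective_of_subsingleton _,
    fun _ => div_ne_zero hlc₂ hlc₁, fun _ => ?_, ?_, rfl⟩
  · simp [h₁, h₂, Nat.sub_add_cancel hd]
  · rw [vlt_eq_of_vlm_eq h₂, Fin.sum_univ_one, vlt_eq_of_vlm_eq h₁]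
    funext j
    by_cases hj : j = p
    · subst hj
      simp only [if_pos, Pi.smul_apply, smul_eq_mul]
      rw [mul_mul_mul_comm, ← C_mul, div_mul_cancel₀ _ hlc₁, ← pow_add, Nat.sub_add_cancel hd]
    · simp [hj]

theorem IsMinimalGroebner.vlpos_ne {M : Submodule F[X] (Fin q → F[X])}
    {G : Finset (Fin q → F[X])} (hG : IsMinimalGroebner M G) {g₁ g₂ : Fin q → F[X]}
    (h₁ : g₁ ∈ G) (h₂ : g₂ ∈ G) (hne : g₁ ≠ g₂) (h0 : g₁ ≠ 0) : vlpos g₁ ≠ vlpos g₂ := by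
  intro hpos
  obtain ⟨d₁, p, hd₁⟩ := exists_vlm_eq h0
  have h0₂ : g₂ ≠ 0 := by
    rintro rfl
    simp [vlpos, hd₁] at hpos
  obtain ⟨d₂, p₂, hd₂⟩ := exists_vlm_eq h0₂
  obtain rfl : p = p₂ := by simpa [vlpos, hd₁, hd₂] using hpos
  rcases le_total d₁ d₂ with hd | hd
  · obtain ⟨h, hred⟩ := exists_reducesOneStep_of_vlm_eq (Finset.mem_erase.2 ⟨hne, h₁⟩) hd₁ hd₂ hd
    exact hG.2 g₂ h₂ h hred
  · obtain ⟨h, hred⟩ :=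
      exists_reducesOneStep_of_vlm_eq (Finset.mem_erase.2 ⟨hne.symm, h₂⟩) hd₂ hd₁ hd
    exact hG.2 g₁ h₁ h hred

end MinimalGroebner

theorem predictable_leading_monomial_general {F : Type*} [Field F] {q m : ℕ}
    (M : Submodule (Polynomial F) (Fin q → Polynomial F))
    (g : Fin m → Fin q → Polynomial F) (hginj : Function.Injective g)
    (hGB : IsMinimalGroebner M (Finset.image g Finset.univ))
    (a : Fin m → Polynomial F) (f : Fin q → Polynomial F)
    (hf : f = ∑ i, a i • g i) :
    vlm f = (Finset.univ.filter fun i => a i ≠ 0).sup fun i => vlm (a i • g i) := by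
  rw [hf, ← Finset.sum_filter_of_ne fun i _ h => left_ne_zero_of_smul h]
  refine vlm_sum_of_ne _ _ fun i hi j hj hij hi0 heq => ?_
  have hpos : vlpos (a i • g i) = vlpos (a j • g j) := by rw [vlpos, vlpos, heq]
  rw [vlpos_smul (Finset.mem_filter.1 hi).2, vlpos_smul (Finset.mem_filter.1 hj).2] at hpos
  exact hGB.vlpos_ne (Finset.mem_image_of_mem g (Finset.mem_univ i))
    (Finset.mem_image_of_mem g (Finset.mem_univ j)) (hginj.ne hij) (right_ne_zero_of_smul hi0) hpos

/-- Predictable Leading Monomial property: if `G = {g_1,…,g_m}` is a minimal Gröbner basis of a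
submodule `M ⊆ F[x]^q` and `0 ≠ f = a_1 g_1 + ⋯ + a_m g_m`, then
`lm f = max_{a_i ≠ 0} lm (a_i g_i)`. -/
theorem predictable_leading_monomial {F : Type*} [Field F] {q m : ℕ}
    (M : Submodule (Polynomial F) (Fin q → Polynomial F))
    (g : Fin m → Fin q → Polynomial F) (hginj : Function.Injective g)
    (hGB : IsMinimalGroebner M (Finset.image g Finset.univ))
    (a : Fin m → Polynomial F) (f : Fin q → Polynomial F)
    (hf : f = ∑ i, a i • g i) (hf0 : f ≠ 0) :
    vlm f = (Finset.univ.filter fun i => a i ≠ 0).sup fun i => vlm (a i • g i) :=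
  predictable_leading_monomial_general M g hginj hGB a f hf
end
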